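/- arXiv:2509.09982 — 2 statements merged into one kernel-verified Lean document; each statement's English description precedes it below -/
import Mathlib

section
/- For a read-once propositional formula φ (each variable occurs at most once, connectives ¬, ∧, ∨, ⊕), strong Kleene evaluation is also complete: if the K3 value of φ under a partial assignment τ is 'unassigned', then there exist two total assignments extending τ on which φ takes different classical truth values. Hence for read-once formulas, the K3 value is definite iff all completions of τ agree. -/
/-- Propositional formulae over variables `α`, with connectives ¬, ∧, ∨, ⊕. -/
inductive Fm (α : Type) : Type
  | var : α → Fm α
  | not : Fm α → Fm α
  | and : Fm α → Fm α → Fm α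
  | or  : Fm α → Fm α → Fm α
  | xor : Fm α → Fm α → Fm α

/-- Classical two-valued evaluation under a total assignment. -/
def evalB {α : Type} (σ : α → Bool) : Fm α → Bool
  | .var v => σ v
  | .not φ => !(evalB σ φ)
  | .and φ ψ => evalB σ φ && evalB σ ψ
  | .or φ ψ => evalB σ φ || evalB σ ψ
  | .xor φ ψ => Bool.xor (evalB σ φ) (evalB σ ψ)

/-- Strong Kleene (K3) three-valued evaluation under a partial assignment;
`none` denotes "unassigned". -/
def evalK {α : Type} (τ : α → Option Bool) : Fm α → Option Bool
  | .var v => τ v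
  | .not φ => (evalK τ φ).map (fun b => !b)
  | .and φ ψ =>
      match evalK τ φ, evalK τ ψ with
      | some false, _ => some false
      | _, some false => some false
      | some true, some true => some true
      | _, _ => none
  | .or φ ψ =>
      match evalK τ φ, evalK τ ψ with
      | some true, _ => some true
      | _, some true => some true
      | some false, some false => some false
      | _, _ => none
  | .xor φ ψ =>
      match evalK τ φ, evalK τ ψ with
      | some a, some b => some (Bool.xor a b)
      | _, _ => none

/-- The total assignment `σ` extends the partial assignment `τ`. -/
def Extends {α : Type} (τ : α → Option Bool) (σ : α → Bool) : Prop :=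
  ∀ v b, τ v = some b → σ v = b

/-- The list of variables occurring in a formula (with multiplicity). -/
def varsOf {α : Type} : Fm α → List α
  | .var v => [v]
  | .not φ => varsOf φ
  | .and φ ψ => varsOf φ ++ varsOf ψ
  | .or φ ψ => varsOf φ ++ varsOf ψ
  | .xor φ ψ => varsOf φ ++ varsOf ψ

/-- A read-once formula: each variable occurs at most once. -/
def ReadOnce {α : Type} (φ : Fm α) : Prop := (varsOf φ).Nodup

/-!
Read the K3 value `o` of a formula as the set of classical values it allows: `b` is allowed iff
`o ≠ some (!b)`. The K3 tables say exactly that the values allowed at `φ ∘ ψ` are the `a ∘ c` with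
`a` allowed at `φ` and `c` allowed at `ψ`. Soundness follows by induction. For completeness of a
read-once formula, induct again: since `φ` and `ψ` share no variables, a completion realising `a`
on `φ` and one realising `c` on `ψ` glue into a single completion realising `a ∘ c`.
-/

section Tables

variable {α : Type} {τ : α → Option Bool} {φ ψ : Fm α} {b : Bool}

theorem evalK_not_ne_some_not_iff :
    evalK τ (.not φ) ≠ some (!b) ↔ evalK τ φ ≠ some b := by
  simp only [evalK]
  generalize evalK τ φ = o
  revert o b
  decide

theorem evalK_and_ne_some_not_iff :
    evalK τ (.and φ ψ) ≠ some (!b) ↔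
      ∃ a c, evalK τ φ ≠ some (!a) ∧ evalK τ ψ ≠ some (!c) ∧ (a && c) = b := by
  simp only [evalK]
  generalize evalK τ φ = o₁
  generalize evalK τ ψ = o₂
  revert o₁ o₂ b
  decide

theorem evalK_or_ne_some_not_iff :
    evalK τ (.or φ ψ) ≠ some (!b) ↔
      ∃ a c, evalK τ φ ≠ some (!a) ∧ evalK τ ψ ≠ some (!c) ∧ (a || c) = b := by
  simp only [evalK]
  generalize evalK τ φ = o₁
  generalize evalK τ ψ = o₂
  revert o₁ o₂ b
  decide

theorem evalK_xor_ne_some_not_iff :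
    evalK τ (.xor φ ψ) ≠ some (!b) ↔
      ∃ a c, evalK τ φ ≠ some (!a) ∧ evalK τ ψ ≠ some (!c) ∧ Bool.xor a c = b := by
  simp only [evalK]
  generalize evalK τ φ = o₁
  generalize evalK τ ψ = o₂
  revert o₁ o₂ b
  decide

end Tables

theorem evalK_ne_some_not_evalB {α : Type} {τ : α → Option Bool} {σ : α → Bool}
    (hσ : Extends τ σ) : ∀ φ : Fm α, evalK τ φ ≠ some (!evalB σ φ)
  | .var v => fun h => Bool.not_ne_self (σ v) (hσ v _ h).symm
  | .not φ => evalK_not_ne_some_not_iff.2 (evalK_ne_some_not_evalB hσ φ)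
  | .and φ ψ => evalK_and_ne_some_not_iff.2
      ⟨_, _, evalK_ne_some_not_evalB hσ φ, evalK_ne_some_not_evalB hσ ψ, rfl⟩
  | .or φ ψ => evalK_or_ne_some_not_iff.2
      ⟨_, _, evalK_ne_some_not_evalB hσ φ, evalK_ne_some_not_evalB hσ ψ, rfl⟩
  | .xor φ ψ => evalK_xor_ne_some_not_iff.2
      ⟨_, _, evalK_ne_some_not_evalB hσ φ, evalK_ne_some_not_evalB hσ ψ, rfl⟩

theorem evalB_eq_of_evalK_eq_some {α : Type} {τ : α → Option Bool} {σ : α → Bool}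
    (hσ : Extends τ σ) {φ : Fm α} {b : Bool} (h : evalK τ φ = some b) : evalB σ φ = b := by
  by_contra hne
  exact evalK_ne_some_not_evalB hσ φ (by rw [h, Bool.eq_not.2 hne, Bool.not_not])

theorem evalB_congr {α : Type} {σ₁ σ₂ : α → Bool} :
    ∀ φ : Fm α, (∀ v ∈ varsOf φ, σ₁ v = σ₂ v) → evalB σ₁ φ = evalB σ₂ φ
  | .var v, h => h v (List.mem_singleton_self v)
  | .not φ, h => congrArg (!·) (evalB_congr φ h)
  | .and φ ψ, h | .or φ ψ, h | .xor φ ψ, h => by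
      simp only [evalB, varsOf, List.mem_append] at h ⊢
      rw [evalB_congr φ fun v hv => h v (.inl hv), evalB_congr ψ fun v hv => h v (.inr hv)]

def IsCompletionValue {α : Type} (τ : α → Option Bool) (φ : Fm α) (b : Bool) : Prop :=
  ∃ σ, Extends τ σ ∧ evalB σ φ = b

section Completeness

variable {α : Type} {τ : α → Option Bool}

theorem isCompletionValue_var {v : α} {b : Bool} (h : τ v ≠ some (!b)) :
    IsCompletionValue τ (.var v) b := by
  classical
  refine ⟨Function.update (fun w => (τ w).getD false) v b, fun w c hw => ?_, by simp [evalB]⟩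
  rcases eq_or_ne w v with rfl | hwv
  · rw [Function.update_self]
    cases b <;> cases c <;> simp_all
  · simp [hwv, hw]

theorem IsCompletionValue.not {φ : Fm α} {b : Bool} (h : IsCompletionValue τ φ b) :
    IsCompletionValue τ (.not φ) (!b) :=
  let ⟨σ, hσ, hb⟩ := h
  ⟨σ, hσ, congrArg (!·) hb⟩

theorem IsCompletionValue.glue {φ ψ χ : Fm α} {op : Bool → Bool → Bool} {a c : Bool}
    (hχ : ∀ σ, evalB σ χ = op (evalB σ φ) (evalB σ ψ)) (hd : (varsOf φ).Disjoint (varsOf ψ))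
    (ha : IsCompletionValue τ φ a) (hc : IsCompletionValue τ ψ c) :
    IsCompletionValue τ χ (op a c) := by
  classical
  obtain ⟨σ₁, hσ₁, rfl⟩ := ha
  obtain ⟨σ₂, hσ₂, rfl⟩ := hc
  refine ⟨fun v => if v ∈ varsOf φ then σ₁ v else σ₂ v, fun v b hv => ?_, ?_⟩
  · dsimp only
    split_ifs
    exacts [hσ₁ v b hv, hσ₂ v b hv]
  · rw [hχ, evalB_congr φ fun v hv => if_pos hv, evalB_congr ψ fun v hv => if_neg (hd · hv)]

theorem ReadOnce.isCompletionValue_of_evalK_ne {φ : Fm α} (hro : ReadOnce φ) {b : Bool}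
    (h : evalK τ φ ≠ some (!b)) : IsCompletionValue τ φ b := by
  induction φ generalizing b with
  | var v => exact isCompletionValue_var h
  | not φ ih =>
      simpa using (ih hro (b := !b) (by simpa using evalK_not_ne_some_not_iff.1 h)).not
  | and φ ψ ih₁ ih₂ =>
      obtain ⟨hφ, hψ, hd⟩ := List.nodup_append'.1 hro
      obtain ⟨a, c, ha, hc, rfl⟩ := evalK_and_ne_some_not_iff.1 h
      exact .glue (fun _ => rfl) hd (ih₁ hφ ha) (ih₂ hψ hc)
  | or φ ψ ih₁ ih₂ =>
      obtain ⟨hφ, hψ, hd⟩ := List.nodup_append'.1 hro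
      obtain ⟨a, c, ha, hc, rfl⟩ := evalK_or_ne_some_not_iff.1 h
      exact .glue (fun _ => rfl) hd (ih₁ hφ ha) (ih₂ hψ hc)
  | xor φ ψ ih₁ ih₂ =>
      obtain ⟨hφ, hψ, hd⟩ := List.nodup_append'.1 hro
      obtain ⟨a, c, ha, hc, rfl⟩ := evalK_xor_ne_some_not_iff.1 h
      exact .glue (fun _ => rfl) hd (ih₁ hφ ha) (ih₂ hψ hc)

theorem ReadOnce.exists_evalB_ne_of_evalK_eq_none {φ : Fm α} (hro : ReadOnce φ)
    (h : evalK τ φ = none) :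
    ∃ σ₁ σ₂ : α → Bool, Extends τ σ₁ ∧ Extends τ σ₂ ∧ evalB σ₁ φ ≠ evalB σ₂ φ := by
  obtain ⟨σ₁, hσ₁, h₁⟩ := hro.isCompletionValue_of_evalK_ne (τ := τ) (b := true) (by simp [h])
  obtain ⟨σ₂, hσ₂, h₂⟩ := hro.isCompletionValue_of_evalK_ne (τ := τ) (b := false) (by simp [h])
  exact ⟨σ₁, σ₂, hσ₁, hσ₂, by simp [h₁, h₂]⟩

end Completeness

/-- For read-once formulae K3 evaluation is complete: if the K3 value is
unassigned there are two total extensions giving different classical values;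
hence the K3 value is definite iff all completions agree. -/
theorem kleene_complete_readOnce {α : Type} (τ : α → Option Bool) (φ : Fm α)
    (hro : ReadOnce φ) :
    (evalK τ φ = none →
      ∃ σ₁ σ₂ : α → Bool, Extends τ σ₁ ∧ Extends τ σ₂ ∧ evalB σ₁ φ ≠ evalB σ₂ φ) ∧
    ((∃ b, evalK τ φ = some b) ↔
      ∀ σ₁ σ₂ : α → Bool, Extends τ σ₁ → Extends τ σ₂ → evalB σ₁ φ = evalB σ₂ φ) := by
  refine ⟨hro.exists_evalB_ne_of_evalK_eq_none, ⟨?_, fun hall => ?_⟩⟩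
  · rintro ⟨b, hb⟩ σ₁ σ₂ h₁ h₂
    rw [evalB_eq_of_evalK_eq_some h₁ hb, evalB_eq_of_evalK_eq_some h₂ hb]
  · rcases hk : evalK τ φ with _ | b
    · obtain ⟨σ₁, σ₂, h₁, h₂, hne⟩ := hro.exists_evalB_ne_of_evalK_eq_none hk
      exact absurd (hall σ₁ σ₂ h₁ h₂) hne
    · exact ⟨b, rfl⟩
end

section
/- Let f = f_l ∧ f_r with f_l, f_r depending on disjoint variable sets, and let X satisfy f_l(X) = false and f_r(X) = true. Then no variable of f_r is a singleton cause of f(X) = false. -/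
/-- Flip the bits of `X` at the indices in `S`. -/
def flipA {n : ℕ} (X : Fin n → Bool) (S : Finset (Fin n)) : Fin n → Bool :=
  fun i => if i ∈ S then !(X i) else X i

/-- `f` is determined by the coordinates in `A`. -/
def DependsOnly {n : ℕ} (f : (Fin n → Bool) → Bool) (A : Finset (Fin n)) : Prop :=
  ∀ X Y : Fin n → Bool, (∀ i ∈ A, X i = Y i) → f X = f Y

/-- The flip distance `d(f,X)`: minimum number of bits of `X` that must be
flipped to change the value of `f`. -/
noncomputable def flipDist {n : ℕ} (f : (Fin n → Bool) → Bool) (X : Fin n → Bool) : ℕ :=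
  sInf {k : ℕ | ∃ S : Finset (Fin n), S.card = k ∧ f (flipA X S) ≠ f X}

/-- `W` is a witness for `i` being a singleton cause of `f X`. -/
def IsWitness {n : ℕ} (f : (Fin n → Bool) → Bool) (X : Fin n → Bool)
    (i : Fin n) (W : Finset (Fin n)) : Prop :=
  i ∉ W ∧ (∀ W' ⊆ W, f (flipA X W') = f X) ∧ f (flipA X (insert i W)) ≠ f X

/-- `i` is a singleton cause (part of a cause) of the output `f X`. -/
def IsSingletonCause {n : ℕ} (f : (Fin n → Bool) → Bool) (X : Fin n → Bool) (i : Fin n) : Prop :=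
  ∃ W, IsWitness f X i W

open Classical in
/-- Degree of responsibility of index `i` for the output `f X`:
`1/(k+1)` for `k` the minimum witness size, `0` if `i` is not a cause. -/
noncomputable def responsibility {n : ℕ} (f : (Fin n → Bool) → Bool) (X : Fin n → Bool)
    (i : Fin n) : ℚ :=
  if IsSingletonCause f X i then
    1 / (((sInf {k : ℕ | ∃ W : Finset (Fin n), W.card = k ∧ IsWitness f X i W} : ℕ) : ℚ) + 1)
  else 0

/-- If `f = f_l ∧ f_r` over disjoint variable sets with `f_l X = false` and
`f_r X = true`, then no variable of `f_r` is a singleton cause of `f X`. -/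
theorem no_cause_in_right_conjunct {n : ℕ} (f fl fr : (Fin n → Bool) → Bool)
    (A B : Finset (Fin n)) (X : Fin n → Bool)
    (hf : ∀ Y, f Y = (fl Y && fr Y))
    (hA : DependsOnly fl A) (hB : DependsOnly fr B) (hAB : Disjoint A B)
    (hl : fl X = false) (hr : fr X = true)
    (i : Fin n) (hi : i ∈ B) :
    ¬ IsSingletonCause f X i := by
  rintro ⟨W, hiW, hW', hchg⟩
  have hfX : f X = false := by rw [hf]; simp [hl]
  have hftrue : f (flipA X (insert i W)) = true := by
    cases h : f (flipA X (insert i W)) with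
    | false => exact absurd (h.trans hfX.symm) hchg
    | true => rfl
  have hfl : fl (flipA X (insert i W)) = true := by
    rw [hf] at hftrue; exact (Bool.and_eq_true _ _ |>.mp hftrue).1
  -- fl agrees between flip (insert i W) and flip (W ∩ A) on A
  have hiA : i ∉ A := fun h => hAB.forall_ne_finset h hi rfl
  have hfl2 : fl (flipA X (W ∩ A)) = true := by
    rw [← hfl]
    apply hA
    intro j hjA
    simp only [flipA, Finset.mem_insert, Finset.mem_inter]
    have hji : j ≠ i := fun h => hiA (h ▸ hjA)
    simp [hjA, hji]
  have hfr2 : fr (flipA X (W ∩ A)) = true := by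
    rw [← hr]
    apply hB
    intro j hjB
    simp only [flipA, Finset.mem_inter]
    rw [if_neg]
    rintro ⟨_, hjA⟩
    exact absurd rfl (hAB.forall_ne_finset hjA hjB)
  have := hW' (W ∩ A) Finset.inter_subset_left
  rw [hf, hfl2, hfr2, hfX] at this
  simp at this
end
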